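/- Equality of the RM constant with its distinct-tuples variant: Let n ≥ 3, let X₁,…,X_{n+1} be Banach spaces, ϖ : X₁×⋯×X_{n+1} → ℂ an (n+1)-linear contraction, J ⊂ {1,…,n+1} with 1 ≤ #J ≤ n−2, v ∈ {1,…,n+1}∖J, and A ⊂ ∏_{j∈J} X_j. Let ‖A‖_{RM′_v(ϖ,J)} be defined exactly as ‖A‖_{RM_v(ϖ,J)} except that the tuples (e_{j,k})_{j∈J} ∈ A occurring in the supremum are required to be pairwise distinct in k. Then ‖A‖_{RM′_v(ϖ,J)} = ‖A‖_{RM_v(ϖ,J)}. -/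

import Mathlib

open MeasureTheory
open scoped ENNReal NNReal BigOperators Classical

noncomputable section

namespace OVM

/-! ### Points and cubes in `ℝ^d` -/

abbrev Pt (d : ℕ) := Fin d → ℝ

structure Cube (d : ℕ) where
  x : Fin d → ℝ
  s : ℝ
  pos : 0 < s

namespace Cube

variable {d : ℕ}

def set (Q : Cube d) : Set (Pt d) := {p | ∀ i, Q.x i ≤ p i ∧ p i < Q.x i + Q.s}

def vol (Q : Cube d) : ℝ := Q.s ^ d

def center (Q : Cube d) : Pt d := fun i => Q.x i + Q.s / 2

/-- The concentric dilate `CQ` with `C = 2√d + 1 ≥ 2√d`. -/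
def dil (Q : Cube d) : Cube d :=
  ⟨fun i => Q.x i + Q.s / 2 - (2 * Real.sqrt d + 1) * Q.s / 2,
   (2 * Real.sqrt d + 1) * Q.s, by
     have h1 : (0:ℝ) < 2 * Real.sqrt d + 1 := by positivity
     exact mul_pos h1 Q.pos⟩

end Cube

/-! ### Dyadic grids: `D_ω = {2^{-k}([0,1)^d + m) + ∑_{2^{-j} < 2^{-k}} ω_j 2^{-j}}` -/

def dyadicShiftVec {d : ℕ} (ω : ℤ → Fin d → Bool) (k : ℤ) : Pt d :=
  fun i => ∑' j : ℤ, if k < j ∧ ω j i = true then (2:ℝ) ^ (-j) else 0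

def dyadicCube {d : ℕ} (ω : ℤ → Fin d → Bool) (k : ℤ) (m : Fin d → ℤ) : Cube d :=
  ⟨fun i => (m i : ℝ) * (2:ℝ) ^ (-k) + dyadicShiftVec ω k i, (2:ℝ) ^ (-k), by positivity⟩

def dyadicGrid {d : ℕ} (ω : ℤ → Fin d → Bool) : Set (Cube d) :=
  {Q | ∃ k m, Q = dyadicCube ω k m}

def IsDyadicGrid {d : ℕ} (D : Set (Cube d)) : Prop := ∃ ω, D = dyadicGrid ω

def stdGrid (d : ℕ) : Set (Cube d) := dyadicGrid fun _ _ => false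

/-- `IsAncestor K Q k` means `Q^{(k)} = K`, i.e. `K` is the `k`-th dyadic ancestor of `Q`. -/
def IsAncestor {d : ℕ} (K Q : Cube d) (k : ℕ) : Prop :=
  Q.set ⊆ K.set ∧ K.s = 2 ^ k * Q.s

/-- `Q'` is a dyadic child of `Q`. -/
def IsChild {d : ℕ} (Q' Q : Cube d) : Prop := IsAncestor Q Q' 1

/-! ### Haar functions -/

def haar1 (a s : ℝ) (b : Bool) : ℝ → ℝ := fun t =>
  if b then
    (if a ≤ t ∧ t < a + s / 2 then (Real.sqrt s)⁻¹
     else if a + s / 2 ≤ t ∧ t < a + s then -(Real.sqrt s)⁻¹ else 0)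
  else if a ≤ t ∧ t < a + s then (Real.sqrt s)⁻¹ else 0

/-- The Haar function `h_Q^η` on the cube `Q`. -/
def haar {d : ℕ} (Q : Cube d) (η : Fin d → Bool) : Pt d → ℝ :=
  fun p => ∏ i, haar1 (Q.x i) Q.s (η i) (p i)

/-- A Haar parameter is cancellative iff it is not identically zero. -/
def cancel {d : ℕ} (η : Fin d → Bool) : Prop := ∃ i, η i = true

/-! ### basic function classes, averages, sparse collections -/

/-- bounded, compactly supported, strongly measurable (the class `L^∞_c`). -/
def BCS {d : ℕ} {X : Type*} [NormedAddCommGroup X] (f : Pt d → X) : Prop :=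
  StronglyMeasurable f ∧ (∃ M, ∀ x, ‖f x‖ ≤ M) ∧ HasCompactSupport f

/-- the average `⟨f⟩_Q`. -/
def cubeAvg {d : ℕ} {X : Type*} [NormedAddCommGroup X] [NormedSpace ℝ X]
    (Q : Cube d) (f : Pt d → X) : X :=
  Q.vol⁻¹ • ∫ y in Q.set, f y

/-- the average `⟨‖f‖_X⟩_Q`, as an extended real. -/
def avgNormE {d : ℕ} {X : Type*} [NormedAddCommGroup X] (Q : Cube d) (f : Pt d → X) : ℝ≥0∞ :=
  (∫⁻ y in Q.set, ENNReal.ofReal ‖f y‖) / ENNReal.ofReal Q.vol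

/-- `S` is an `η`-sparse collection of cubes of `D`. -/
def IsSparseIn {d : ℕ} (η : ℝ) (S D : Set (Cube d)) : Prop :=
  S ⊆ D ∧ ∃ E : Cube d → Set (Pt d),
    (∀ Q ∈ S, E Q ⊆ Q.set ∧ ENNReal.ofReal (η * Q.vol) < volume (E Q)) ∧
    S.PairwiseDisjoint E

/-- `L^p`-norm of an `ℝ≥0∞`-valued function (`0 < p < ∞`). -/
def lpNormE {d : ℕ} (F : Pt d → ℝ≥0∞) (p : ℝ) : ℝ≥0∞ := (∫⁻ x, F x ^ p) ^ p⁻¹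

/-- distance between two sets. -/
def setDist {α : Type*} [PseudoEMetricSpace α] (A B : Set α) : ℝ :=
  (⨅ (x ∈ A) (y ∈ B), edist x y).toReal

/-! ### randomized norms -/

/-- `‖(e_k)‖_{Rad(X)} = (E‖∑ ε_k e_k‖²)^{1/2}`. -/
def radNorm {X : Type*} [NormedAddCommGroup X] {K : ℕ} (e : Fin K → X) : ℝ :=
  Real.sqrt ((∑ ε : Fin K → Bool, ‖∑ k, if ε k then e k else -e k‖ ^ 2) / 2 ^ K)

/-- `‖(e_{l,m})‖_{Rad₂(X)}`, doubly indexed random sums. -/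
def rad2Norm {X : Type*} [NormedAddCommGroup X] {N M : ℕ} (e : Fin N → Fin M → X) : ℝ :=
  Real.sqrt ((∑ ε : Fin N → Fin M → Bool, ‖∑ l, ∑ m, if ε l m then e l m else -e l m‖ ^ 2) /
    2 ^ (N * M))

/-- `(E E'‖∑ ε_i ε'_j e_{i,j}‖²)^{1/2}`, two independent families of signs. -/
def radRad {X : Type*} [NormedAddCommGroup X] {N : ℕ} (e : Fin N → Fin N → X) : ℝ :=
  Real.sqrt ((∑ ε : Fin N → Bool, ∑ δ : Fin N → Bool,
      ‖∑ i, ∑ j, if ε i = δ j then e i j else -e i j‖ ^ 2) / 4 ^ N)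

/-- Pisier's property `(α)`. -/
def HasPisierAlpha (X : Type*) [NormedAddCommGroup X] [NormedSpace ℝ X] : Prop :=
  ∃ C : ℝ, ∀ (N : ℕ) (a : Fin N → Fin N → ℝ) (e : Fin N → Fin N → X),
    (∀ i j, |a i j| ≤ 1) → radRad (fun i j => a i j • e i j) ≤ C * radRad e

/-! ### multilinear contractions and RM constants -/

section RM

variable {n : ℕ} {Z : Fin (n + 1) → Type*} [∀ j, NormedAddCommGroup (Z j)]

/-- `ϖ` is an `(n+1)`-linear contraction. -/
def IsContraction [∀ j, NormedSpace ℂ (Z j)] (ϖ : (∀ j, Z j) → ℂ) : Prop :=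
  (∃ Λ : MultilinearMap ℂ Z ℂ, ⇑Λ = ϖ) ∧ ∀ e, ‖ϖ e‖ ≤ ∏ j, ‖e j‖

/-- The `RM_v(ϖ, J)` constant of a finite indexed family `{(e_{j,k})_{j∈J}}_{k=1}^K`:
the supremum of `|∑_k ϖ(e_{1,k},…,e_{n+1,k})|` over all completions of the family with a
fixed unit vector in the slot `v` and Rademacher-normalized sequences elsewhere. -/
def RMfam (ϖ : (∀ j, Z j) → ℂ) (J : Finset (Fin (n + 1))) (v : Fin (n + 1))
    {K : ℕ} (e : ∀ j ∈ J, Fin K → Z j) : ℝ≥0∞ :=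
  ⨆ (g : ∀ j, Fin K → Z j) (_ :
      (∀ j (hj : j ∈ J), g j = e j hj) ∧
      (∃ gv : Z v, (∀ k, g v k = gv) ∧ ‖gv‖ ≤ 1) ∧
      ∀ j, j ∉ J → j ≠ v → radNorm (g j) ≤ 1),
    ENNReal.ofReal ‖∑ k, ϖ fun j => g j k‖

/-- The `RM_v(ϖ, J)` constant of a set `A` of `J`-tuples. -/
def RMconst (ϖ : (∀ j, Z j) → ℂ) (J : Finset (Fin (n + 1))) (v : Fin (n + 1))
    (A : Set (∀ j ∈ J, Z j)) : ℝ≥0∞ :=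
  ⨆ (K : ℕ) (e : ∀ j ∈ J, Fin K → Z j)
    (_ : ∀ k : Fin K, (fun j hj => e j hj k) ∈ A), RMfam ϖ J v e

/-- The `RM'_v(ϖ, J)` constant: as `RMconst`, but with pairwise distinct tuples. -/
def RMconstDistinct (ϖ : (∀ j, Z j) → ℂ) (J : Finset (Fin (n + 1))) (v : Fin (n + 1))
    (A : Set (∀ j ∈ J, Z j)) : ℝ≥0∞ :=
  ⨆ (K : ℕ) (e : ∀ j ∈ J, Fin K → Z j)
    (_ : (∀ k : Fin K, (fun j hj => e j hj k) ∈ A) ∧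
         Function.Injective fun k : Fin K => (fun j hj => e j hj k : ∀ j ∈ J, Z j)),
    RMfam ϖ J v e

/-- The `RM_v(ϖ, J)` constant of a family indexed by `ℕ` (sup of its finite truncations). -/
def RMfamInf (ϖ : (∀ j, Z j) → ℂ) (J : Finset (Fin (n + 1))) (v : Fin (n + 1))
    (e : ∀ j ∈ J, ℕ → Z j) : ℝ≥0∞ :=
  ⨆ K : ℕ, RMfam ϖ J v fun j hj => fun k : Fin K => e j hj k

/-- The factor appearing in the `R_ϖ`-boundedness condition; for `J = ∅` (the case `n = 2`)
no RM factor appears. -/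
def RMfactor (ϖ : (∀ j, Z j) → ℂ) (J : Finset (Fin (n + 1))) (v : Fin (n + 1))
    {K : ℕ} (e : ∀ j ∈ J, Fin K → Z j) : ℝ≥0∞ :=
  if J = ∅ then 1 else RMfam ϖ J v e

/-! ### the Rademacher maximal function and the RMF property -/

variable [∀ j, NormedSpace ℂ (Z j)]

/-- The multilinear Rademacher maximal function `RM_{D,ϖ,J,v}[(f_j)_{j∈J}]`. -/
def RMmax {d : ℕ} (ϖ : (∀ j, Z j) → ℂ) (D : Set (Cube d)) (J : Finset (Fin (n + 1)))
    (v : Fin (n + 1)) (f : ∀ j ∈ J, Pt d → Z j) (x : Pt d) : ℝ≥0∞ :=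
  RMconst ϖ J v {a | ∃ Q ∈ D, x ∈ Q.set ∧ a = fun j hj => cubeAvg Q (f j hj)}

/-- The `RMF_ϖ` property of the tuple `(Z_1, …, Z_{n+1})` relative to the lattice `D`
and the exponents `p`. -/
def HasRMF {d : ℕ} (ϖ : (∀ j, Z j) → ℂ) (D : Set (Cube d)) (p : Fin (n + 1) → ℝ≥0∞) : Prop :=
  ∀ j₁ j₂ : Fin (n + 1), j₁ ≠ j₂ → ∃ v : Fin (n + 1), v ≠ j₁ ∧ v ≠ j₂ ∧
    ∀ J : Finset (Fin (n + 1)), J.Nonempty → (∀ j ∈ J, j ≠ j₁ ∧ j ≠ j₂ ∧ j ≠ v) →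
      ∃ C : ℝ≥0∞, C ≠ ⊤ ∧ ∀ f : ∀ j ∈ J, Pt d → Z j,
        lpNormE (RMmax ϖ D J v f) ((∑ j ∈ J, (p j)⁻¹)⁻¹).toReal ≤
          C * ∏ j ∈ J.attach, eLpNorm (f j.1 j.2) (p j.1) volume

end RM

/-!
Repeated tuples are merged by randomization. Let `c k` be the class of the `k`-th tuple, and
`Λ_l` the form `ϖ` with the `l`-th distinct tuple and `e_v` put in the fixed slots. Give each
free slot `j ≠ μ` an independent random sign sequence `σ_j`, and slot `μ` the product
`∏_{j ≠ μ} σ_j`, so that the signs of all slots multiply to `1` at every `k`. Summing `g_j` with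
these signs over each class gives families `h_j` indexed by the distinct tuples. Expanding by
multilinearity, the average over `σ` of `∑_l Λ_l (h(l))` keeps exactly the terms in which every
slot uses the same `k`, so it equals `∑_k Λ_{c k} (g(k))`.

Each realization is at most `(∏_j ‖h_j‖_Rad) · RM'`, by homogeneity. Signs that are constant
on classes are absorbed by `σ_j`, so `E ‖h_j‖²_Rad = ‖g_j‖²_Rad ≤ 1`. This holds also for
`j = μ`, whose signs are uniform because those of a second free slot `ν` are. As the slots
`j ≠ μ` are independent, `E ∏_j ‖h_j‖_Rad ≤ (E ‖h_μ‖²_Rad + ∏_{j ≠ μ} E ‖h_j‖²_Rad) / 2 ≤ 1`.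
-/

section SignSums

variable {ι : Type*} [Fintype ι] [DecidableEq ι]

lemma sum_units_apply_mul_apply {K : ℕ} (a b : Fin K) :
    ∑ τ : Fin K → ℤˣ, ((τ a * τ b : ℤˣ) : ℂ) = if a = b then 2 ^ K else 0 := by
  split_ifs with hab
  · subst hab
    simp [Int.units_mul_self, Fintype.card_units_int]
  · set flip : Fin K → ℤˣ := Pi.mulSingle a (-1)
    have hinv : ∑ τ : Fin K → ℤˣ, (((τ * flip) a * (τ * flip) b : ℤˣ) : ℂ)
        = ∑ τ : Fin K → ℤˣ, ((τ a * τ b : ℤˣ) : ℂ) :=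
      Fintype.sum_equiv (Equiv.mulRight flip) _ _ fun _ => rfl
    have hneg : ∑ τ : Fin K → ℤˣ, (((τ * flip) a * (τ * flip) b : ℤˣ) : ℂ)
        = -∑ τ : Fin K → ℤˣ, ((τ a * τ b : ℤˣ) : ℂ) := by
      rw [← Finset.sum_neg_distrib]
      refine Finset.sum_congr rfl fun τ _ => ?_
      simp [flip, Ne.symm hab]
    exact CharZero.eq_neg_self_iff.mp (hinv ▸ hneg)

lemma sum_piFinset_ite_forall_eq {α M : Type*} [DecidableEq α] [AddCommMonoid M]
    (s : Finset α) (μ : ι) (f : (ι → α) → M) :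
    ∑ r ∈ Fintype.piFinset fun _ => s, (if ∀ j, r j = r μ then f r else 0)
      = ∑ k ∈ s, f fun _ => k := by
  rw [← Finset.sum_filter]
  refine Finset.sum_nbij' (fun r => r μ) (fun k _ => k) (fun r hr => ?_) (fun k hk => ?_)
    (fun r hr => ?_) (fun _ _ => rfl) (fun r hr => ?_)
  · exact Fintype.mem_piFinset.mp (Finset.mem_filter.mp hr).1 μ
  · exact Finset.mem_filter.mpr ⟨Fintype.mem_piFinset.mpr fun _ => hk, fun _ => rfl⟩
  · exact funext fun j => ((Finset.mem_filter.mp hr).2 j).symm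
  · exact congrArg f (funext fun j => (Finset.mem_filter.mp hr).2 j)

variable {G : Type*} [Fintype G]

lemma sum_prod_le_pow_card (ψ : ι → G → ℝ) (hψ0 : ∀ j x, 0 ≤ ψ j x) {B : ℝ}
    (hψ : ∀ j, ∑ x, ψ j x ≤ B) :
    ∑ σ : ι → G, ∏ j, ψ j (σ j) ≤ B ^ Fintype.card ι := by
  rw [← Fintype.prod_sum]
  calc ∏ j, ∑ x, ψ j x ≤ ∏ _j : ι, B :=
        Finset.prod_le_prod (fun j _ => Finset.sum_nonneg fun x _ => hψ0 j x) fun j _ => hψ j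
    _ = B ^ Fintype.card ι := by simp

lemma sum_comp_prod_erase [CommGroup G] {M : Type*} [AddCommMonoid M] {μ ν : ι} (hνμ : ν ≠ μ)
    (φ : G → M) :
    ∑ σ : ι → G, φ (∏ i ∈ Finset.univ.erase μ, σ i) = ∑ σ : ι → G, φ (σ ν) := by
  set rest : (ι → G) → G := fun σ => ∏ i ∈ (Finset.univ.erase μ).erase ν, σ i
  set shear : (ι → G) → (ι → G) := fun σ => σ * Pi.mulSingle ν (rest σ)
  have hrest : ∀ σ, rest (shear σ) = rest σ := fun σ =>
    Finset.prod_congr rfl fun i hi => by simp [shear, Finset.ne_of_mem_erase hi]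
  have hinj : Function.Injective shear := fun σ σ' h => by
    have hr : rest σ = rest σ' := by rw [← hrest σ, ← hrest σ', h]
    simpa [shear, hr] using h
  refine Fintype.sum_bijective shear (Finite.injective_iff_bijective.mp hinj) _ _ fun σ => ?_
  have hν : shear σ ν = σ ν * rest σ := by simp [shear]
  rw [hν, Finset.mul_prod_erase _ _ (Finset.mem_erase.mpr ⟨hνμ, Finset.mem_univ ν⟩)]

end SignSums

section RadNorm

variable {X : Type*} [NormedAddCommGroup X] {K : ℕ}

lemma radNorm_nonneg (e : Fin K → X) : 0 ≤ radNorm e := Real.sqrt_nonneg _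

@[simp]
lemma radNorm_zero : radNorm (0 : Fin K → X) = 0 := by
  simp [radNorm]

variable [NormedSpace ℂ X]

lemma radNorm_sq_eq_sum_units (e : Fin K → X) :
    radNorm e ^ 2 = (∑ ε : Fin K → ℤˣ, ‖∑ k, (ε k : ℂ) • e k‖ ^ 2) / 2 ^ K := by
  have hsign : Function.Bijective fun b : Bool => if b then (1 : ℤˣ) else -1 := by
    rw [Fintype.bijective_iff_injective_and_card]
    exact ⟨by decide, rfl⟩
  rw [radNorm, Real.sq_sqrt (by positivity)]
  congr 1
  refine Fintype.sum_bijective _ hsign.comp_left _ _ fun ε => ?_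
  congr 2
  refine Finset.sum_congr rfl fun k _ => ?_
  cases h : ε k <;> simp [h]

lemma radNorm_smul (a : ℂ) (e : Fin K → X) : radNorm (a • e) = ‖a‖ * radNorm e := by
  have hsq : radNorm (a • e) ^ 2 = (‖a‖ * radNorm e) ^ 2 := by
    simp only [radNorm_sq_eq_sum_units, mul_pow, Pi.smul_apply, smul_comm _ a, ← Finset.smul_sum,
      norm_smul]
    rw [← Finset.mul_sum, mul_div_assoc]
  exact (sq_eq_sq₀ (radNorm_nonneg _) (mul_nonneg (norm_nonneg _) (radNorm_nonneg e))).mp hsq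

lemma eq_zero_of_radNorm_eq_zero {e : Fin K → X} (he : radNorm e = 0) : e = 0 := by
  have hsum : ∀ ε : Fin K → ℤˣ, ∑ k, (ε k : ℂ) • e k = 0 := by
    have h := radNorm_sq_eq_sum_units e
    rw [he, zero_pow two_ne_zero, eq_comm, div_eq_zero_iff,
      Finset.sum_eq_zero_iff_of_nonneg fun _ _ => by positivity] at h
    simpa using h.resolve_right (by positivity)
  funext k
  -- `e k` is half the difference of the signed sums with all signs `+` and with only `ε k` flipped
  have h := congrArg₂ (· - ·) (hsum 1) (hsum (Pi.mulSingle k (-1)))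
  simp only [← Finset.sum_sub_distrib, ← sub_smul, sub_zero] at h
  rw [Finset.sum_eq_single k (fun j _ hj => by simp [hj]) (by simp)] at h
  simpa [two_smul] using h

end RadNorm

section SignedFiberSum

variable {X : Type*} [NormedAddCommGroup X] [NormedSpace ℂ X] {K L : ℕ}

def signedFiberSum (c : Fin K → Fin L) (s : Fin K → ℤˣ) (g : Fin K → X) (l : Fin L) : X :=
  ∑ k with c k = l, (s k : ℂ) • g k

lemma sum_units_smul_signedFiberSum (c : Fin K → Fin L) (s : Fin K → ℤˣ) (g : Fin K → X)
    (ε : Fin L → ℤˣ) :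
    ∑ l, (ε l : ℂ) • signedFiberSum c s g l = ∑ k, ((s * (ε ∘ c)) k : ℂ) • g k := by
  rw [← Finset.sum_fiberwise Finset.univ c]
  refine Finset.sum_congr rfl fun l _ => ?_
  rw [signedFiberSum, Finset.smul_sum]
  refine Finset.sum_congr rfl fun k hk => ?_
  rw [(Finset.mem_filter.mp hk).2.symm, smul_smul]
  simp [mul_comm]

lemma sum_radNorm_signedFiberSum_sq (c : Fin K → Fin L) (g : Fin K → X) :
    ∑ τ : Fin K → ℤˣ, radNorm (signedFiberSum c τ g) ^ 2 = 2 ^ K * radNorm g ^ 2 := by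
  have habsorb : ∀ ε : Fin L → ℤˣ,
      ∑ τ : Fin K → ℤˣ, ‖∑ l, (ε l : ℂ) • signedFiberSum c τ g l‖ ^ 2
        = ∑ τ : Fin K → ℤˣ, ‖∑ k, (τ k : ℂ) • g k‖ ^ 2 := fun ε => by
    simp only [sum_units_smul_signedFiberSum]
    exact Fintype.sum_equiv (Equiv.mulRight (ε ∘ c)) _ _ fun _ => rfl
  simp only [radNorm_sq_eq_sum_units]
  rw [← Finset.sum_div, Finset.sum_comm, Finset.sum_congr rfl fun ε _ => habsorb ε,
    Finset.sum_const, Finset.card_univ, Fintype.card_fun, Fintype.card_units_int,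
    Fintype.card_fin, nsmul_eq_mul]
  field_simp
  push_cast
  ring

end SignedFiberSum

section EvenSigns

variable {ι : Type*} [Fintype ι] [DecidableEq ι] {K : ℕ}

def evenSigns (μ : ι) (σ : ι → Fin K → ℤˣ) : ι → Fin K → ℤˣ :=
  fun j => if j = μ then ∏ i ∈ Finset.univ.erase μ, σ i else σ j

@[simp]
lemma evenSigns_self (μ : ι) (σ : ι → Fin K → ℤˣ) :
    evenSigns μ σ μ = ∏ i ∈ Finset.univ.erase μ, σ i :=
  if_pos rfl

lemma evenSigns_of_ne {μ j : ι} (hj : j ≠ μ) (σ : ι → Fin K → ℤˣ) : evenSigns μ σ j = σ j :=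
  if_neg hj

lemma prod_evenSigns_apply (μ : ι) (σ : ι → Fin K → ℤˣ) (r : ι → Fin K) :
    ∏ j, evenSigns μ σ j (r j) = ∏ j, σ j (r j) * σ j (r μ) := by
  rw [← Finset.mul_prod_erase _ _ (Finset.mem_univ μ),
    ← Finset.mul_prod_erase _ _ (Finset.mem_univ μ), Int.units_mul_self, one_mul,
    Finset.prod_mul_distrib, mul_comm]
  simp only [evenSigns, ↓reduceIte, Finset.prod_apply]
  congr 1
  exact Finset.prod_congr rfl fun j hj => by rw [if_neg (Finset.ne_of_mem_erase hj)]

lemma sum_prod_evenSigns (μ : ι) (r : ι → Fin K) :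
    ∑ σ : ι → Fin K → ℤˣ, ((∏ j, evenSigns μ σ j (r j) : ℤˣ) : ℂ)
      = if ∀ j, r j = r μ then (2 ^ K) ^ Fintype.card ι else 0 := by
  simp only [prod_evenSigns_apply, Units.coe_prod, Int.cast_prod]
  rw [← Fintype.prod_sum (fun j (τ : Fin K → ℤˣ) => ((τ (r j) * τ (r μ) : ℤˣ) : ℂ))]
  simp only [sum_units_apply_mul_apply, Fintype.prod_ite_zero, Finset.prod_const,
    Finset.card_univ]

end EvenSigns

section Merging

variable {ι : Type*} [Fintype ι] {Z : ι → Type*} [∀ j, NormedAddCommGroup (Z j)]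
  [∀ j, NormedSpace ℂ (Z j)] {K L : ℕ}

lemma norm_sum_le_prod_radNorm_mul (Λ : Fin L → MultilinearMap ℂ Z ℂ) {R : ℝ}
    (hR : ∀ h : ∀ j, Fin L → Z j, (∀ j, radNorm (h j) ≤ 1) → ‖∑ l, Λ l (fun j => h j l)‖ ≤ R)
    (h : ∀ j, Fin L → Z j) :
    ‖∑ l, Λ l (fun j => h j l)‖ ≤ (∏ j, radNorm (h j)) * R := by
  by_cases hzero : ∃ j, radNorm (h j) = 0
  · obtain ⟨j, hj⟩ := hzero
    have hsum : ∑ l, Λ l (fun j => h j l) = 0 := Finset.sum_eq_zero fun l _ =>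
      (Λ l).map_coord_zero j (congrFun (eq_zero_of_radNorm_eq_zero hj) l)
    rw [hsum, norm_zero, Finset.prod_eq_zero (Finset.mem_univ j) hj, zero_mul]
  · simp only [not_exists] at hzero
    set a : ι → ℂ := fun j => ((radNorm (h j))⁻¹ : ℝ)
    have hnormalized := hR (fun j => a j • h j) fun j => by
      rw [radNorm_smul, Complex.norm_real, Real.norm_eq_abs,
        abs_of_nonneg (inv_nonneg.mpr (radNorm_nonneg _)), inv_mul_cancel₀ (hzero j)]
    simp only [Pi.smul_apply, MultilinearMap.map_smul_univ, ← Finset.smul_sum, norm_smul,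
      norm_prod, a, Complex.norm_real, Real.norm_eq_abs, abs_inv] at hnormalized
    have hpos : 0 < ∏ j, |radNorm (h j)| :=
      Finset.prod_pos fun j _ => abs_pos.mpr (hzero j)
    rw [Finset.prod_inv_distrib, inv_mul_le_iff₀ hpos] at hnormalized
    simpa only [abs_of_nonneg, radNorm_nonneg] using hnormalized

variable [DecidableEq ι]

lemma sum_sum_evenSigns_signedFiberSum (Λ : Fin L → MultilinearMap ℂ Z ℂ) (c : Fin K → Fin L)
    (g : ∀ j, Fin K → Z j) (μ : ι) :
    ∑ σ : ι → Fin K → ℤˣ, ∑ l, Λ l (fun j => signedFiberSum c (evenSigns μ σ j) (g j) l)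
      = (2 ^ K) ^ Fintype.card ι * ∑ k, Λ (c k) (fun j => g j k) := by
  have hexpand : ∀ σ l, Λ l (fun j => signedFiberSum c (evenSigns μ σ j) (g j) l)
      = ∑ r ∈ Fintype.piFinset fun _ => {k | c k = l},
          ((∏ j, evenSigns μ σ j (r j) : ℤˣ) : ℂ) • Λ l (fun j => g j (r j)) := by
    intro σ l
    simp only [signedFiberSum, MultilinearMap.map_sum_finset, MultilinearMap.map_smul_univ]
    push_cast
    rfl
  calc ∑ σ : ι → Fin K → ℤˣ, ∑ l, Λ l (fun j => signedFiberSum c (evenSigns μ σ j) (g j) l)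
      = ∑ l, ∑ r ∈ Fintype.piFinset fun _ => {k | c k = l},
          (∑ σ : ι → Fin K → ℤˣ, ((∏ j, evenSigns μ σ j (r j) : ℤˣ) : ℂ)) •
            Λ l (fun j => g j (r j)) := by
        simp only [hexpand, Finset.sum_smul]
        rw [Finset.sum_comm]
        exact Finset.sum_congr rfl fun l _ => Finset.sum_comm
    _ = ∑ l, ∑ k with c k = l, (2 ^ K) ^ Fintype.card ι * Λ l (fun j => g j k) := by
        simp only [sum_prod_evenSigns, smul_eq_mul, ite_mul, zero_mul, sum_piFinset_ite_forall_eq]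
    _ = (2 ^ K) ^ Fintype.card ι * ∑ k, Λ (c k) (fun j => g j k) := by
        rw [Finset.mul_sum, ← Finset.sum_fiberwise Finset.univ c]
        refine Finset.sum_congr rfl fun l _ => Finset.sum_congr rfl fun k hk => ?_
        rw [(Finset.mem_filter.mp hk).2]

lemma sum_prod_radNorm_signedFiberSum_le {μ ν : ι} (hνμ : ν ≠ μ) (c : Fin K → Fin L)
    (g : ∀ j, Fin K → Z j) (hg : ∀ j, radNorm (g j) ≤ 1) :
    ∑ σ : ι → Fin K → ℤˣ, ∏ j, radNorm (signedFiberSum c (evenSigns μ σ j) (g j))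
      ≤ (2 ^ K) ^ Fintype.card ι := by
  set ψ : ∀ j, (Fin K → ℤˣ) → ℝ := fun j τ => radNorm (signedFiberSum c τ (g j)) ^ 2
  have hψ0 : ∀ j τ, 0 ≤ ψ j τ := fun _ _ => sq_nonneg _
  have hψ : ∀ j, ∑ τ, ψ j τ ≤ 2 ^ K := fun j => by
    rw [sum_radNorm_signedFiberSum_sq]
    exact mul_le_of_le_one_right (by positivity) (pow_le_one₀ (radNorm_nonneg _) (hg j))
  have hone : ∑ _τ : Fin K → ℤˣ, (1 : ℝ) = 2 ^ K := by simp [Fintype.card_units_int]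
  have hμ : ∑ σ : ι → Fin K → ℤˣ, ψ μ (evenSigns μ σ μ) ≤ (2 ^ K) ^ Fintype.card ι := by
    have := sum_prod_le_pow_card (fun j τ => if j = ν then ψ μ τ else 1)
      (fun j τ => by split_ifs <;> simp [hψ0]) (B := 2 ^ K)
      (fun j => by split_ifs; exacts [hψ μ, hone.le])
    simp only [evenSigns_self]
    rw [sum_comp_prod_erase hνμ (fun τ => ψ μ τ)]
    simpa using this
  have hrest : ∑ σ : ι → Fin K → ℤˣ, ∏ j ∈ Finset.univ.erase μ, ψ j (σ j)
      ≤ (2 ^ K) ^ Fintype.card ι := by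
    have := sum_prod_le_pow_card (fun j τ => if j = μ then 1 else ψ j τ)
      (fun j τ => by split_ifs <;> simp [hψ0]) (B := 2 ^ K)
      (fun j => by split_ifs; exacts [hone.le, hψ j])
    refine le_of_eq_of_le (Finset.sum_congr rfl fun σ _ => ?_) this
    rw [← Finset.mul_prod_erase _ _ (Finset.mem_univ μ), if_pos rfl, one_mul]
    exact Finset.prod_congr rfl fun j hj => (if_neg (Finset.ne_of_mem_erase hj)).symm
  have hamgm : ∀ σ : ι → Fin K → ℤˣ, ∏ j, radNorm (signedFiberSum c (evenSigns μ σ j) (g j))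
      ≤ (ψ μ (evenSigns μ σ μ) + ∏ j ∈ Finset.univ.erase μ, ψ j (σ j)) / 2 := fun σ => by
    rw [← Finset.mul_prod_erase _ _ (Finset.mem_univ μ), le_div_iff₀ two_pos]
    have hsq : ∏ j ∈ Finset.univ.erase μ, ψ j (σ j)
        = (∏ j ∈ Finset.univ.erase μ, radNorm (signedFiberSum c (evenSigns μ σ j) (g j))) ^ 2 := by
      rw [← Finset.prod_pow]
      exact Finset.prod_congr rfl fun j hj => by rw [evenSigns_of_ne (Finset.ne_of_mem_erase hj)]
    rw [hsq, mul_comm _ 2, ← mul_assoc]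
    exact two_mul_le_add_sq _ _
  calc _ ≤ ∑ σ : ι → Fin K → ℤˣ,
          (ψ μ (evenSigns μ σ μ) + ∏ j ∈ Finset.univ.erase μ, ψ j (σ j)) / 2 :=
        Finset.sum_le_sum fun σ _ => hamgm σ
    _ ≤ (2 ^ K) ^ Fintype.card ι := by
        rw [← Finset.sum_div, Finset.sum_add_distrib]
        linarith

theorem norm_sum_comp_le_of_forall_radNorm_le [Nontrivial ι] (Λ : Fin L → MultilinearMap ℂ Z ℂ)
    (c : Fin K → Fin L) {R : ℝ}
    (hR : ∀ h : ∀ j, Fin L → Z j, (∀ j, radNorm (h j) ≤ 1) → ‖∑ l, Λ l (fun j => h j l)‖ ≤ R)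
    (g : ∀ j, Fin K → Z j) (hg : ∀ j, radNorm (g j) ≤ 1) :
    ‖∑ k, Λ (c k) (fun j => g j k)‖ ≤ R := by
  obtain ⟨ν, μ, hνμ⟩ := exists_pair_ne ι
  have hN : (0 : ℝ) < (2 ^ K) ^ Fintype.card ι := by positivity
  have hR0 : 0 ≤ R := (norm_nonneg _).trans (hR 0 fun j => by simp)
  refine le_of_mul_le_mul_left ?_ hN
  calc (2 ^ K) ^ Fintype.card ι * ‖∑ k, Λ (c k) (fun j => g j k)‖
      = ‖∑ σ : ι → Fin K → ℤˣ,
          ∑ l, Λ l (fun j => signedFiberSum c (evenSigns μ σ j) (g j) l)‖ := by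
        rw [sum_sum_evenSigns_signedFiberSum, norm_mul]
        simp
    _ ≤ ∑ σ : ι → Fin K → ℤˣ, (∏ j, radNorm (signedFiberSum c (evenSigns μ σ j) (g j))) * R :=
        (norm_sum_le _ _).trans <| Finset.sum_le_sum fun σ _ =>
          norm_sum_le_prod_radNorm_mul Λ hR _
    _ ≤ (2 ^ K) ^ Fintype.card ι * R := by
        rw [← Finset.sum_mul]
        exact mul_le_mul_of_nonneg_right (sum_prod_radNorm_signedFiberSum_le hνμ c g hg) hR0

end Merging

lemma exists_surjective_fin_comp_eq_iff {α : Type*} {K : ℕ} (t : Fin K → α) :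
    ∃ (L : ℕ) (c : Fin K → Fin L), Function.Surjective c ∧ ∀ k k', c k = c k' ↔ t k = t k' :=
  ⟨_, Finite.equivFin (Set.range t) ∘ Set.rangeFactorization t,
    (Finite.equivFin _).surjective.comp Set.rangeFactorization_surjective,
    fun _ _ => (Finite.equivFin _).injective.eq_iff.trans Subtype.ext_iff⟩

section RMconst

variable {n : ℕ} {Z : Fin (n + 1) → Type*} [∀ j, NormedAddCommGroup (Z j)]

lemma RMconstDistinct_le_RMconst (ϖ : (∀ j, Z j) → ℂ) (J : Finset (Fin (n + 1)))
    (v : Fin (n + 1)) (A : Set (∀ j ∈ J, Z j)) :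
    RMconstDistinct ϖ J v A ≤ RMconst ϖ J v A :=
  iSup₂_mono fun _ _ => iSup_le fun he => le_iSup_of_le he.1 le_rfl

theorem RMconst_le_RMconstDistinct [∀ j, NormedSpace ℂ (Z j)] (Λ : MultilinearMap ℂ Z ℂ)
    {J : Finset (Fin (n + 1))} {v : Fin (n + 1)} [Nontrivial {j // j ∉ J ∧ j ≠ v}]
    (A : Set (∀ j ∈ J, Z j)) :
    RMconst Λ J v A ≤ RMconstDistinct Λ J v A := by
  refine iSup₂_le fun K e => iSup_le fun he => iSup₂_le fun g hg => ?_
  obtain ⟨hgJ, ⟨gv, hgv, hgv1⟩, hgrad⟩ := hg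
  obtain htop | hlt := eq_top_or_lt_top (RMconstDistinct Λ J v A)
  · exact htop ▸ le_top
  rw [ENNReal.ofReal_le_iff_le_toReal hlt.ne]
  obtain ⟨L, c, hc, hck⟩ := exists_surjective_fin_comp_eq_iff fun k j hj => e j hj k
  set k₀ := Function.surjInv hc
  have hk₀ : ∀ l, c (k₀ l) = l := Function.surjInv_eq hc
  have hfixed : ∀ j, ¬(j ∉ J ∧ j ≠ v) → ∀ k, g j (k₀ (c k)) = g j k := by
    intro j hj k
    by_cases hjJ : j ∈ J
    · rw [hgJ j hjJ]
      exact congrFun (congrFun ((hck _ _).mp (hk₀ (c k))) j) hjJ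
    · obtain rfl : j = v := by tauto
      rw [hgv, hgv]
  set Λc : Fin L → MultilinearMap ℂ (fun i : {j // j ∉ J ∧ j ≠ v} => Z i) ℂ :=
    fun l => Λ.domDomRestrict _ fun i => g i (k₀ l)
  have hR : ∀ h : ∀ i : {j // j ∉ J ∧ j ≠ v}, Fin L → Z i, (∀ i, radNorm (h i) ≤ 1) →
      ‖∑ l, Λc l (fun i => h i l)‖ ≤ (RMconstDistinct Λ J v A).toReal := by
    intro h hh
    rw [← ENNReal.ofReal_le_iff_le_toReal hlt.ne]
    refine le_iSup₂_of_le L (fun j hj l => e j hj (k₀ l)) (le_iSup_of_le ⟨fun l => he _,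
      fun l l' hl => by rw [← hk₀ l, ← hk₀ l', hck]; exact hl⟩ ?_)
    refine le_iSup₂_of_le (fun j l => if hj : j ∉ J ∧ j ≠ v then h ⟨j, hj⟩ l else g j (k₀ l))
      ⟨fun j hj => ?_, ⟨gv, fun l => ?_, hgv1⟩, fun j hjJ hjv => ?_⟩ le_rfl
    · funext l
      simp [hj, hgJ j hj]
    · simp [hgv]
    · simpa [hjJ, hjv] using hh ⟨j, hjJ, hjv⟩
  convert norm_sum_comp_le_of_forall_radNorm_le Λc c hR (fun i => g i)
    (fun i => hgrad i i.2.1 i.2.2) using 4 with k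
  simp only [Λc, MultilinearMap.domDomRestrict_apply]
  congr 1
  funext j
  split_ifs with hj
  · rfl
  · exact (hfixed j hj k).symm

end RMconst

theorem RMconstDistinct_eq_RMconst_general {n : ℕ} (hn : 3 ≤ n)
    (Z : Fin (n + 1) → Type u) [∀ j, NormedAddCommGroup (Z j)] [∀ j, NormedSpace ℂ (Z j)]
    (ϖ : (∀ j, Z j) → ℂ) (hϖ : IsContraction ϖ)
    (J : Finset (Fin (n + 1))) (hJ2 : J.card ≤ n - 2)
    (v : Fin (n + 1)) (hv : v ∉ J)
    (A : Set (∀ j ∈ J, Z j)) :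
    RMconstDistinct ϖ J v A = RMconst ϖ J v A := by
  obtain ⟨⟨Λ, rfl⟩, -⟩ := hϖ
  have hfree : ({j | j ∉ J ∧ j ≠ v} : Finset (Fin (n + 1))) = (insert v J)ᶜ := by
    ext j
    simp [and_comm]
  have : Nontrivial {j // j ∉ J ∧ j ≠ v} := by
    rw [← Fintype.one_lt_card_iff_nontrivial, Fintype.card_subtype, hfree, Finset.card_compl,
      Finset.card_insert_of_notMem hv, Fintype.card_fin]
    omega
  exact (RMconstDistinct_le_RMconst _ J v A).antisymm (RMconst_le_RMconstDistinct Λ A)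

/-- the RM constant of a set of tuples equals its distinct-tuples variant. -/
theorem RMconstDistinct_eq_RMconst {n : ℕ} (hn : 3 ≤ n)
    (Z : Fin (n + 1) → Type u) [∀ j, NormedAddCommGroup (Z j)] [∀ j, NormedSpace ℂ (Z j)]
    (ϖ : (∀ j, Z j) → ℂ) (hϖ : IsContraction ϖ)
    (J : Finset (Fin (n + 1))) (hJ1 : 1 ≤ J.card) (hJ2 : J.card ≤ n - 2)
    (v : Fin (n + 1)) (hv : v ∉ J)
    (A : Set (∀ j ∈ J, Z j)) :
    RMconstDistinct ϖ J v A = RMconst ϖ J v A :=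
  RMconstDistinct_eq_RMconst_general hn Z ϖ hϖ J hJ2 v hv A

end OVM
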